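/- arXiv:2111.09093 — 6 statements merged into one kernel-verified Lean document; each statement's English description precedes it below -/
import Mathlib

section
/- Let p ∈ (0,1), n ≥ 2 a natural number, with p ≠ (n-1)/n. Then q̂ = (p - √((n-1)·p·(1-p)))/(1 - n(1-p)) satisfies q̂ ∈ (0,1), q̂ satisfies the first-order condition f'(q̂) = 0 for f(q) = (p - 2q + q² + nq - npq)/(q(1-q)), and f(q̂) ≤ f(q) for all q ∈ (0,1). -/
theorem star_optimal_trust (p : ℝ) (hp : p ∈ Set.Ioo (0:ℝ) 1)
    (n : ℕ) (hn : 2 ≤ n) (hpn : p ≠ ((n:ℝ) - 1) / n) :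
    let f : ℝ → ℝ := fun q => (p - 2*q + q^2 + (n:ℝ)*q - (n:ℝ)*p*q) / (q * (1 - q))
    let qhat : ℝ := (p - Real.sqrt (((n:ℝ) - 1) * p * (1 - p))) / (1 - (n:ℝ) * (1 - p))
    qhat ∈ Set.Ioo (0:ℝ) 1 ∧ deriv f qhat = 0 ∧ ∀ q ∈ Set.Ioo (0:ℝ) 1, f qhat ≤ f q := by
  obtain ⟨hp0, hp1⟩ := hp
  intro f qhat
  have hn2 : (2:ℝ) ≤ (n:ℝ) := by exact_mod_cast hn
  have hn0 : (n:ℝ) ≠ 0 := by linarith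
  set b : ℝ := ((n:ℝ) - 1) * (1 - p) with hbdef
  have hbpos : 0 < b := by
    apply mul_pos <;> linarith
  set sa := Real.sqrt p with hsadef
  set sb := Real.sqrt b with hsbdef
  have hsa : 0 < sa := Real.sqrt_pos.2 hp0
  have hsb : 0 < sb := Real.sqrt_pos.2 hbpos
  have hsa2 : sa^2 = p := Real.sq_sqrt hp0.le
  have hsb2 : sb^2 = b := Real.sq_sqrt hbpos.le
  have hne : sa ≠ sb := by
    intro h
    apply hpn
    have hpb : p = b := by rw [← hsa2, ← hsb2, h]
    rw [eq_div_iff hn0]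
    rw [hbdef] at hpb
    linear_combination hpb
  have hd : sa - sb ≠ 0 := sub_ne_zero.2 hne
  have hS : 0 < sa + sb := by linarith
  have hsqrt : Real.sqrt (((n:ℝ) - 1) * p * (1 - p)) = sa * sb := by
    rw [hsadef, hsbdef, ← Real.sqrt_mul hp0.le]
    congr 1
    rw [hbdef]; ring
  have hq : qhat = sa / (sa + sb) := by
    show (p - Real.sqrt (((n:ℝ) - 1) * p * (1 - p))) / (1 - (n:ℝ) * (1 - p)) = _
    rw [hsqrt]
    have h1 : p - sa * sb = sa * (sa - sb) := by rw [← hsa2]; ring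
    have h2 : 1 - (n:ℝ) * (1 - p) = (sa - sb) * (sa + sb) := by
      have : (sa - sb) * (sa + sb) = sa^2 - sb^2 := by ring
      rw [this, hsa2, hsb2, hbdef]; ring
    rw [h1, h2]
    rw [div_eq_div_iff (by exact mul_ne_zero hd (ne_of_gt hS)) (ne_of_gt hS)]
    ring
  have hq0 : 0 < qhat := by rw [hq]; positivity
  have hq1 : qhat < 1 := by
    rw [hq, div_lt_one hS]; linarith
  have h1q : 0 < 1 - qhat := by linarith
  -- partial fraction decomposition
  have hfeq : ∀ q : ℝ, q ∈ Set.Ioo (0:ℝ) 1 → f q = p / q + b / (1 - q) - 1 := by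
    rintro q ⟨hq0', hq1'⟩
    have h1 : q ≠ 0 := ne_of_gt hq0'
    have h2 : (1:ℝ) - q ≠ 0 := by linarith
    show (p - 2*q + q^2 + (n:ℝ)*q - (n:ℝ)*p*q) / (q * (1 - q)) = _
    rw [hbdef]
    field_simp
    ring
  have hqmem : qhat ∈ Set.Ioo (0:ℝ) 1 := ⟨hq0, hq1⟩
  have h1qhat : 1 - qhat = sb / (sa + sb) := by
    rw [hq]; field_simp; ring
  have hsa' : sa ≠ 0 := ne_of_gt hsa
  have hsb' : sb ≠ 0 := ne_of_gt hsb
  have hS' : sa + sb ≠ 0 := ne_of_gt hS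
  have hval : f qhat = (sa + sb)^2 - 1 := by
    rw [hfeq qhat hqmem, hq, ← hsa2, ← hsb2]
    have h1 : 1 - sa / (sa + sb) = sb / (sa + sb) := by field_simp; ring
    rw [h1]
    field_simp
  refine ⟨hqmem, ?_, ?_⟩
  · -- derivative
    set g : ℝ → ℝ := fun q => p / q + b / (1 - q) - 1 with hg
    have hev : f =ᶠ[nhds qhat] g := by
      filter_upwards [Ioo_mem_nhds hq0 hq1] with q hqm
      rw [hfeq q hqm]
    rw [hev.deriv_eq]
    have hda : HasDerivAt (fun q : ℝ => p / q) (-p / qhat^2) qhat := by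
      have := (hasDerivAt_const qhat p).div (hasDerivAt_id qhat) (ne_of_gt hq0)
      refine this.congr_deriv ?_
      show (0 * qhat - p * 1) / qhat ^ 2 = _
      ring
    have hdb : HasDerivAt (fun q : ℝ => b / (1 - q)) (b / (1 - qhat)^2) qhat := by
      have hinner : HasDerivAt (fun q : ℝ => 1 - q) (-1) qhat := by
        simpa using (hasDerivAt_id qhat).const_sub 1
      have := (hasDerivAt_const qhat b).div hinner (ne_of_gt h1q)
      refine this.congr_deriv ?_
      show (0 * (1 - qhat) - b * (-1)) / (1 - qhat) ^ 2 = _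
      ring
    have hdg : HasDerivAt g (-p / qhat^2 + b / (1 - qhat)^2) qhat := by
      exact ((hda.add hdb).sub_const 1)
    rw [hdg.deriv]
    rw [hq, ← hsa2, ← hsb2]
    have h1 : 1 - sa / (sa + sb) = sb / (sa + sb) := by field_simp; ring
    rw [h1]
    field_simp
    ring
  · rintro q hqm
    rw [hval, hfeq q hqm]
    obtain ⟨hq0', hq1'⟩ := hqm
    have h2 : (0:ℝ) < 1 - q := by linarith
    rw [← hsa2, ← hsb2]
    rw [div_add_div _ _ (ne_of_gt hq0') (ne_of_gt h2), sub_le_sub_iff_right, le_div_iff₀ (by positivity)]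
    nlinarith [sq_nonneg (sa * (1 - q) - sb * q)]
end

section
/- For p ∈ (0,1) with p ≠ 1/2, let q̂ = (p - √(p(1-p)))/(2p-1). Then q̂ ∈ (0,1) and the function z(q) = (q² - 2pq + p)/(q(1-q)) on (0,1) attains its minimum at q̂, with minimum value z(q̂) = 2√(p(1-p)). -/
/-!
Write `s = √(p(1-p))`. Since `s² = p(1-p)` one has `(p+s)² = p(1+2s)`, which makes the
numerator of `z(q) - 2s`, namely `(1+2s)q² - 2(p+s)q + p`, the perfect square
`(1+2s)(q - q̂)²` with `q̂ = (p+s)/(1+2s)`. Hence `z(q) - 2s ≥ 0` on `(0,1)`, with equality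
exactly at `q̂`; rationalising shows `q̂ = (p - s)/(2p - 1)` when `p ≠ 1/2`.
-/

open Set

namespace LineTrust

variable {p s : ℝ}

theorem add_sq_eq_mul (hs : s ^ 2 = p * (1 - p)) : (p + s) ^ 2 = p * (1 + 2 * s) := by
  linear_combination hs

theorem sub_div_eq_add_div (hs : s ^ 2 = p * (1 - p)) (hp : 2 * p - 1 ≠ 0)
    (hs' : 1 + 2 * s ≠ 0) : (p - s) / (2 * p - 1) = (p + s) / (1 + 2 * s) := by
  rw [div_eq_div_iff hp hs']
  linear_combination (-2 : ℝ) * hs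

theorem add_div_mem_Ioo (hp : p ∈ Ioo (0 : ℝ) 1) (hs : 0 ≤ s) :
    (p + s) / (1 + 2 * s) ∈ Ioo (0 : ℝ) 1 := by
  obtain ⟨hp0, hp1⟩ := hp
  constructor
  · positivity
  · rw [div_lt_one (by positivity)]
    linarith

theorem div_eq_add_sq_div (hs : s ^ 2 = p * (1 - p)) (hs' : 1 + 2 * s ≠ 0) {q : ℝ}
    (hq : q ≠ 0) (hq' : 1 - q ≠ 0) :
    (q ^ 2 - 2 * p * q + p) / (q * (1 - q)) =
      2 * s + (1 + 2 * s) * (q - (p + s) / (1 + 2 * s)) ^ 2 / (q * (1 - q)) := by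
  field_simp
  linear_combination (-1 : ℝ) * add_sq_eq_mul hs

end LineTrust

open LineTrust in
theorem line_optimal_trust (p : ℝ) (hp : p ∈ Set.Ioo (0:ℝ) 1) (hp2 : p ≠ 1/2) :
    let z : ℝ → ℝ := fun q => (q^2 - 2*p*q + p) / (q * (1 - q))
    let qhat : ℝ := (p - Real.sqrt (p * (1 - p))) / (2*p - 1)
    qhat ∈ Set.Ioo (0:ℝ) 1 ∧ (∀ q ∈ Set.Ioo (0:ℝ) 1, z qhat ≤ z q) ∧
      z qhat = 2 * Real.sqrt (p * (1 - p)) := by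
  intro z qhat
  set s := Real.sqrt (p * (1 - p))
  have hs : s ^ 2 = p * (1 - p) := Real.sq_sqrt (by nlinarith [hp.1, hp.2])
  have hs0 : 0 ≤ s := Real.sqrt_nonneg _
  have hs' : 1 + 2 * s ≠ 0 := by positivity
  have hqhat : qhat = (p + s) / (1 + 2 * s) :=
    sub_div_eq_add_div hs (fun h => hp2 (by linarith)) hs'
  have hmem : qhat ∈ Ioo (0 : ℝ) 1 := hqhat ▸ add_div_mem_Ioo hp hs0
  have hz : ∀ q ∈ Ioo (0 : ℝ) 1, z q = 2 * s + (1 + 2 * s) * (q - qhat) ^ 2 / (q * (1 - q)) :=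
    fun q hq => hqhat ▸ div_eq_add_sq_div hs hs' hq.1.ne' (sub_pos.2 hq.2).ne'
  have hzhat : z qhat = 2 * s := by simp [hz qhat hmem]
  refine ⟨hmem, fun q hq => ?_, hzhat⟩
  rw [hzhat, hz q hq]
  exact le_add_of_nonneg_right <|
    div_nonneg (by positivity) (mul_pos hq.1 (sub_pos.2 hq.2)).le
end

section
/- For p ∈ (0,1) with p ≠ 1/2, the number q̂ = (-1 + p + √(1 - 3p + 3p²))/(2p - 1) lies in (0,1) and satisfies the symmetry property: it is a fixed point of the best-response map, i.e., ∂v/∂r (p, q̂, q̂) = 0, where v(p,q,r) = p·(2q - qr)/(2q + 2r - 2qr) + (1-p)·(1 - q + r - qr)/(2(1 - qr)). -/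
/-!
Along the diagonal `r = q`, the derivative of Player I's payoff in Player II's trust `r` is
`((2p-1)q² + 2(1-p)q - p) / (2q(2-q)(1-q²))`, so the symmetric equilibria are the roots in `(0,1)`
of the quadratic `(2p-1)q² + 2(1-p)q - p`. Rationalising the numerator of `q̂` gives
`q̂ = p / (1 - p + s)` with `s = √(1 - 3p + 3p²)`; in this form `q̂` is visibly a root, and
`0 < q̂ < 1` follows from `s² - (2p-1)² = p(1-p) > 0`.
-/

namespace TreasureHunt

open Real

/-- Player I's winning probability `v(p, q, r)`. -/
noncomputable def payoff (p q r : ℝ) : ℝ :=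
  p * (2*q - q*r) / (2*q + 2*r - 2*q*r) + (1 - p) * (1 - q + r - q*r) / (2 * (1 - q*r))

noncomputable def equilibriumTrust (p : ℝ) : ℝ :=
  p / (1 - p + √(1 - 3*p + 3*p^2))

theorem hasDerivAt_payoff_diag (p q : ℝ) (hq₀ : q ≠ 0) (hq₂ : 2 - q ≠ 0)
    (hq₁ : 1 - q^2 ≠ 0) :
    HasDerivAt (payoff p q)
      (((2*p - 1)*q^2 + 2*(1 - p)*q - p) / (2*q*(2 - q)*(1 - q^2))) q := by
  have hden₁ : 2*q + 2*q - 2*q*q ≠ 0 := by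
    rw [show 2*q + 2*q - 2*q*q = 2*q*(2 - q) by ring]; positivity
  have hden₂ : 2 * (1 - q*q) ≠ 0 := by
    rw [← sq]; positivity
  have hid := hasDerivAt_id' q
  have num₁ : HasDerivAt (fun r => p * (2*q - q*r)) (-(p*q)) q := by
    simpa using ((hid.const_mul q).const_sub (2*q)).const_mul p
  have den₁ : HasDerivAt (fun r => 2*q + 2*r - 2*q*r) (2 - 2*q) q := by
    simpa using ((hid.const_mul 2).const_add (2*q)).fun_sub (hid.const_mul (2*q))
  have num₂ : HasDerivAt (fun r => (1 - p) * (1 - q + r - q*r)) ((1 - p) * (1 - q)) q := by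
    simpa [mul_one_sub] using ((hid.const_add (1 - q)).fun_sub (hid.const_mul q)).const_mul (1 - p)
  have den₂ : HasDerivAt (fun r => 2 * (1 - q*r)) (-(2*q)) q := by
    simpa using ((hid.const_mul q).const_sub 1).const_mul 2
  refine ((num₁.fun_div den₁ hden₁).fun_add (num₂.fun_div den₂ hden₂)).congr_deriv ?_
  rw [show 2*q + 2*q - 2*q*q = 2*q*(2 - q) by ring, show 2 * (1 - q*q) = 2 * (1 - q^2) by ring]
  field_simp
  ring

theorem sq_sqrt_disc (p : ℝ) : √(1 - 3*p + 3*p^2) ^ 2 = 1 - 3*p + 3*p^2 :=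
  sq_sqrt (by nlinarith [sq_nonneg (2*p - 1)])

theorem one_sub_add_sqrt_disc_pos (p : ℝ) : 0 < 1 - p + √(1 - 3*p + 3*p^2) := by
  nlinarith [sq_sqrt_disc p, sqrt_nonneg (1 - 3*p + 3*p^2)]

theorem div_eq_equilibriumTrust {p : ℝ} (hp : p ≠ 1/2) :
    (-1 + p + √(1 - 3*p + 3*p^2)) / (2*p - 1) = equilibriumTrust p := by
  have h₁ : 2*p - 1 ≠ 0 := by contrapose! hp; linarith
  rw [equilibriumTrust, div_eq_div_iff h₁ (one_sub_add_sqrt_disc_pos p).ne']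
  linear_combination sq_sqrt_disc p

theorem equilibriumTrust_isRoot (p : ℝ) :
    (2*p - 1) * equilibriumTrust p ^ 2 + 2*(1 - p) * equilibriumTrust p - p = 0 := by
  have hd := (one_sub_add_sqrt_disc_pos p).ne'
  have hs := sq_sqrt_disc p
  rw [equilibriumTrust]
  generalize √(1 - 3*p + 3*p^2) = s at hd hs ⊢
  field_simp
  linear_combination (-p) * hs

theorem equilibriumTrust_mem_Ioo {p : ℝ} (hp : p ∈ Set.Ioo 0 1) :
    equilibriumTrust p ∈ Set.Ioo 0 1 := by
  obtain ⟨hp₀, hp₁⟩ := hp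
  have hs := sq_sqrt_disc p
  have hd := one_sub_add_sqrt_disc_pos p
  have hgt : 2*p - 1 < √(1 - 3*p + 3*p^2) := by
    nlinarith [sqrt_nonneg (1 - 3*p + 3*p^2)]
  exact ⟨div_pos hp₀ hd, (div_lt_one hd).2 (by linarith)⟩

theorem deriv_payoff_equilibriumTrust {p : ℝ} (hp : p ∈ Set.Ioo 0 1) :
    deriv (payoff p (equilibriumTrust p)) (equilibriumTrust p) = 0 := by
  obtain ⟨hq₀, hq₁⟩ := equilibriumTrust_mem_Ioo hp
  have hderiv := hasDerivAt_payoff_diag p _ hq₀.ne' (by linarith) (by nlinarith)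
  rw [hderiv.deriv, equilibriumTrust_isRoot, zero_div]

end TreasureHunt

theorem symmetric_game_equilibrium (p : ℝ) (hp : p ∈ Set.Ioo (0:ℝ) 1) (hp2 : p ≠ 1/2) :
    let v : ℝ → ℝ → ℝ := fun q r =>
      p * (2*q - q*r) / (2*q + 2*r - 2*q*r) +
      (1 - p) * (1 - q + r - q*r) / (2 * (1 - q*r))
    let qhat : ℝ := (-1 + p + Real.sqrt (1 - 3*p + 3*p^2)) / (2*p - 1)
    qhat ∈ Set.Ioo (0:ℝ) 1 ∧ deriv (fun r => v qhat r) qhat = 0 := by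
  intro v qhat
  rw [show qhat = TreasureHunt.equilibriumTrust p from TreasureHunt.div_eq_equilibriumTrust hp2]
  exact ⟨TreasureHunt.equilibriumTrust_mem_Ioo hp, TreasureHunt.deriv_payoff_equilibriumTrust hp⟩
end

section
/- Let v(p,q,r) = p·q/(q + r - qr) + (1-p)·(1-q)/(1 - qr) for p, q, r ∈ (0,1). Then ∂v/∂q (p, q, 1/2) = 2·f(p,q)/((q-2)²(q+1)²) where f(p,q) = -1 + 5p - 2q - 2pq - q² + 2pq², and for 4/5 < p ≤ 1 we have f(p,q) > 0 for all q ∈ [0,1]. -/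
/-!
Differentiating termwise, `∂/∂q [q / (q + r - q r)] = r / (q + r - q r)²` and
`∂/∂q [(1 - q) / (1 - q r)] = (r - 1) / (1 - q r)²`; at `r = 1/2` the two terms put over the
common denominator `(q - 2)² (q + 1)²` give `2 f(p, q)`. Positivity of `f` for `p > 4/5` comes from
`f(p, q) = (3/5)(1 - q)(5 - q) + (p - 4/5)(5 - 2q + 2q²)`: the numerator is affine in `p` with
positive slope and vanishes at `p = 4/5` only at `q = 1`.
-/

open Set

theorem hasDerivAt_div_add_sub_mul {q r : ℝ} (h : q + r - q * r ≠ 0) :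
    HasDerivAt (fun x => x / (x + r - x * r)) (r / (q + r - q * r) ^ 2) q := by
  have hden : HasDerivAt (fun x => x + r - x * r) (1 - 1 * r) q :=
    ((hasDerivAt_id' q).add_const r).sub ((hasDerivAt_id' q).mul_const r)
  exact ((hasDerivAt_id' q).div hden h).congr_deriv (by ring)

theorem hasDerivAt_one_sub_div_one_sub_mul {q r : ℝ} (h : 1 - q * r ≠ 0) :
    HasDerivAt (fun x => (1 - x) / (1 - x * r)) ((r - 1) / (1 - q * r) ^ 2) q := by
  have hden : HasDerivAt (fun x => 1 - x * r) (-(1 * r)) q :=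
    ((hasDerivAt_id' q).mul_const r).const_sub 1
  exact (((hasDerivAt_id' q).const_sub 1).div hden h).congr_deriv (by ring)

theorem hasDerivAt_payoff_left (p : ℝ) {q r : ℝ} (h₁ : q + r - q * r ≠ 0) (h₂ : 1 - q * r ≠ 0) :
    HasDerivAt (fun x => p * x / (x + r - x * r) + (1 - p) * (1 - x) / (1 - x * r))
      (p * r / (q + r - q * r) ^ 2 + (1 - p) * (r - 1) / (1 - q * r) ^ 2) q := by
  simp only [mul_div_assoc]
  exact ((hasDerivAt_div_add_sub_mul h₁).const_mul p).add
    ((hasDerivAt_one_sub_div_one_sub_mul h₂).const_mul (1 - p))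

theorem payoff_deriv_half_eq {p q : ℝ} (h₁ : q + 1 ≠ 0) (h₂ : q - 2 ≠ 0) :
    p * (1 / 2) / (q + 1 / 2 - q * (1 / 2)) ^ 2 + (1 - p) * (1 / 2 - 1) / (1 - q * (1 / 2)) ^ 2 =
      2 * (-1 + 5 * p - 2 * q - 2 * p * q - q ^ 2 + 2 * p * q ^ 2) / ((q - 2) ^ 2 * (q + 1) ^ 2) := by
  rw [show q + 1 / 2 - q * (1 / 2) = (q + 1) / 2 by ring,
    show 1 - q * (1 / 2) = -((q - 2) / 2) by ring]
  field_simp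
  ring

theorem numerator_pos_of_four_fifths_lt {p q : ℝ} (hp : 4 / 5 < p) (hq : q ∈ Icc (0 : ℝ) 1) :
    0 < -1 + 5 * p - 2 * q - 2 * p * q - q ^ 2 + 2 * p * q ^ 2 := by
  obtain ⟨hq₀, hq₁⟩ := hq
  have hsplit : -1 + 5 * p - 2 * q - 2 * p * q - q ^ 2 + 2 * p * q ^ 2 =
      3 / 5 * (1 - q) * (5 - q) + (p - 4 / 5) * (2 * (q - 1 / 2) ^ 2 + 9 / 2) := by ring
  rw [hsplit]
  have hconst : 0 ≤ 3 / 5 * (1 - q) * (5 - q) :=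
    mul_nonneg (mul_nonneg (by norm_num) (by linarith)) (by linarith)
  have hslope : 0 < (p - 4 / 5) * (2 * (q - 1 / 2) ^ 2 + 9 / 2) :=
    mul_pos (by linarith) (by positivity)
  linarith

theorem asymmetric_game_derivative_general (p : ℝ) :
    let v : ℝ → ℝ → ℝ := fun q r =>
      p * q / (q + r - q*r) + (1 - p) * (1 - q) / (1 - q*r)
    let f : ℝ → ℝ → ℝ := fun p q => -1 + 5*p - 2*q - 2*p*q - q^2 + 2*p*q^2
    (∀ q ∈ Set.Ioo (0:ℝ) 1,
      deriv (fun q => v q (1/2)) q = 2 * f p q / ((q - 2)^2 * (q + 1)^2)) ∧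
    (4/5 < p → ∀ q ∈ Set.Icc (0:ℝ) 1, 0 < f p q) := by
  intro v f
  refine ⟨fun q ⟨hq₀, hq₁⟩ => ?_, fun hp q hq => numerator_pos_of_four_fifths_lt hp hq⟩
  have hderiv := hasDerivAt_payoff_left p (q := q) (r := 1 / 2) (by linarith) (by linarith)
  rw [hderiv.deriv]
  exact payoff_deriv_half_eq (by linarith) (by linarith)

theorem asymmetric_game_derivative (p : ℝ) (hp : p ∈ Set.Ioo (0:ℝ) 1) :
    let v : ℝ → ℝ → ℝ := fun q r =>
      p * q / (q + r - q*r) + (1 - p) * (1 - q) / (1 - q*r)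
    let f : ℝ → ℝ → ℝ := fun p q => -1 + 5*p - 2*q - 2*p*q - q^2 + 2*p*q^2
    (∀ q ∈ Set.Ioo (0:ℝ) 1,
      deriv (fun q => v q (1/2)) q = 2 * f p q / ((q - 2)^2 * (q + 1)^2)) ∧
    (4/5 < p → ∀ q ∈ Set.Icc (0:ℝ) 1, 0 < f p q) :=
  asymmetric_game_derivative_general p
end

section
/- For 1/2 < p < 4/5, the number Q(p) = (1 + p - 3√(p(1-p)))/(2p - 1) lies in (0,1) and satisfies f(p, Q(p)) = 0, where f(p,q) = -1 + 5p - 2q - 2pq - q² + 2pq². Moreover, v(p, Q(p), 1/2) = (4/3)(1 - √(p(1-p))), where v(p,q,r) = p·q/(q+r-qr) + (1-p)(1-q)/(1-qr). -/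
/-!
Writing `s = √(p(1-p))`, the first-order condition is the quadratic
`f(p,q) = (2p-1) q² - 2(1+p) q + (5p-1)`, whose reduced discriminant is
`(1+p)² - (2p-1)(5p-1) = 9 s²`; so `Q` is its smaller root `(1+p-3s)/(2p-1)`.
Comparing squares, `0 < Q` amounts to `(2p-1)(5p-1) > 0` and `Q < 1` to
`(2p-1)(5p-4) < 0`, which is where the bound `p < 4/5` comes from. At `r = 1/2` the
denominators of `v` become `3(p-s)/(2(2p-1))` and `3(p-1+s)/(2(2p-1))`, and the value
collapses to `(4/3)(1-s)` after eliminating `s²`.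
-/

open Set

noncomputable section

namespace TreasureHunt

def trustRoot (p s : ℝ) : ℝ := (1 + p - 3 * s) / (2 * p - 1)

variable {p s : ℝ}

theorem foc_trustRoot_eq_zero (hp : 2 * p - 1 ≠ 0) (hs : s ^ 2 = p * (1 - p)) :
    -1 + 5 * p - 2 * trustRoot p s - 2 * p * trustRoot p s - trustRoot p s ^ 2
      + 2 * p * trustRoot p s ^ 2 = 0 := by
  unfold trustRoot
  -- `field_simp` only recognises the denominator as nonzero when it is an atom.
  generalize hd : 2 * p - 1 = d at hp ⊢
  field_simp
  subst hd
  linear_combination (9 * (2 * p - 1)) * hs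

theorem trustRoot_mem_Ioo (hp : 1 / 2 < p) (hp' : p < 4 / 5) (hs : s ^ 2 = p * (1 - p))
    (hs₀ : 0 ≤ s) : trustRoot p s ∈ Ioo 0 1 := by
  have h2p : 0 < 2 * p - 1 := by linarith
  have hlt : 3 * s < 1 + p :=
    lt_of_pow_lt_pow_left₀ 2 (by linarith)
      (by nlinarith [mul_pos h2p (by linarith : 0 < 5 * p - 1)])
  have hgt : 2 - p < 3 * s :=
    lt_of_pow_lt_pow_left₀ 2 (by linarith)
      (by nlinarith [mul_pos h2p (by linarith : 0 < 4 - 5 * p)])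
  exact ⟨div_pos (by linarith) h2p, (div_lt_one h2p).2 (by linarith)⟩

theorem mem_Ioo_of_sq_eq_mul_one_sub (hp : 1 / 2 < p) (hp' : p < 1)
    (hs : s ^ 2 = p * (1 - p)) (hs₀ : 0 ≤ s) : s ∈ Ioo (1 - p) p := by
  constructor
  · exact lt_of_pow_lt_pow_left₀ 2 hs₀ (by nlinarith)
  · exact lt_of_pow_lt_pow_left₀ 2 (by linarith) (by nlinarith)

theorem value_trustRoot_half (hp : 2 * p - 1 ≠ 0) (hs : s ^ 2 = p * (1 - p))
    (hps : p - s ≠ 0) (hps' : p - 1 + s ≠ 0) :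
    p * trustRoot p s / (trustRoot p s + 1 / 2 - trustRoot p s * (1 / 2))
      + (1 - p) * (1 - trustRoot p s) / (1 - trustRoot p s * (1 / 2))
      = 4 / 3 * (1 - s) := by
  unfold trustRoot
  generalize hd : 2 * p - 1 = d at hp ⊢
  have hden₁ : (1 + p - 3 * s) / d + 1 / 2 - (1 + p - 3 * s) / d * (1 / 2)
      = 3 * (p - s) / (2 * d) := by
    field_simp; subst hd; ring
  have hden₂ : 1 - (1 + p - 3 * s) / d * (1 / 2) = 3 * (p - 1 + s) / (2 * d) := by
    field_simp; subst hd; ring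
  rw [hden₁, hden₂]
  field_simp
  subst hd
  linear_combination (2 - 4 * s) * hs

end TreasureHunt

end

open TreasureHunt in
theorem asymmetric_game_value (p : ℝ) (hp1 : 1/2 < p) (hp2 : p < 4/5) :
    let Q : ℝ := (1 + p - 3 * Real.sqrt (p * (1 - p))) / (2*p - 1)
    let f : ℝ → ℝ → ℝ := fun p q => -1 + 5*p - 2*q - 2*p*q - q^2 + 2*p*q^2
    let v : ℝ → ℝ → ℝ → ℝ := fun p q r =>
      p * q / (q + r - q*r) + (1 - p) * (1 - q) / (1 - q*r)
    Q ∈ Set.Ioo (0:ℝ) 1 ∧ f p Q = 0 ∧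
      v p Q (1/2) = (4/3) * (1 - Real.sqrt (p * (1 - p))) := by
  intro Q f v
  have hs : Real.sqrt (p * (1 - p)) ^ 2 = p * (1 - p) := Real.sq_sqrt (by nlinarith)
  have hs₀ := Real.sqrt_nonneg (p * (1 - p))
  obtain ⟨hs_gt, hs_lt⟩ := mem_Ioo_of_sq_eq_mul_one_sub hp1 (by linarith) hs hs₀
  exact ⟨trustRoot_mem_Ioo hp1 hp2 hs hs₀, foc_trustRoot_eq_zero (by linarith) hs,
    value_trustRoot_half (by linarith) hs (by linarith) (by linarith)⟩
end

section
/- For p ∈ (0,1) and q ∈ (0,1), the function T_A(p,q) = p²/q - 3p(p-1)/(q² - q + 1) + (1-p)²/(1-q) is positive, tends to +∞ as q → 0⁺ and q → 1⁻, and hence attains an interior minimum on (0,1). -/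
open Filter

theorem triangle_cycle_time (p : ℝ) (hp : p ∈ Set.Ioo (0:ℝ) 1) :
    let T : ℝ → ℝ := fun q =>
      p^2 / q - 3*p*(p - 1) / (q^2 - q + 1) + (1 - p)^2 / (1 - q)
    (∀ q ∈ Set.Ioo (0:ℝ) 1, 0 < T q) ∧
    Tendsto T (nhdsWithin 0 (Set.Ioi 0)) atTop ∧
    Tendsto T (nhdsWithin 1 (Set.Iio 1)) atTop ∧
    ∃ qhat ∈ Set.Ioo (0:ℝ) 1, ∀ q ∈ Set.Ioo (0:ℝ) 1, T qhat ≤ T q := by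
  obtain ⟨hp0, hp1⟩ := hp
  intro T
  have hquad : ∀ q : ℝ, 0 < q^2 - q + 1 := fun q => by nlinarith [sq_nonneg (q - 1/2)]
  -- positivity
  have hpos : ∀ q ∈ Set.Ioo (0:ℝ) 1, 0 < T q := by
    rintro q ⟨hq0, hq1⟩
    have h1 : 0 < p^2 / q := div_pos (by positivity) hq0
    have h2 : 0 < (-(3*p*(p-1))) / (q^2 - q + 1) := div_pos (by nlinarith) (hquad q)
    have h3 : 0 < (1-p)^2 / (1-q) := div_pos (by nlinarith) (by linarith)
    have hT : T q = p^2/q + (-(3*p*(p-1)))/(q^2-q+1) + (1-p)^2/(1-q) := by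
      simp only [T]; ring
    rw [hT]; linarith
  -- continuity on Ioo 0 1
  have hcont : ∀ q ∈ Set.Ioo (0:ℝ) 1, ContinuousAt T q := by
    rintro q ⟨hq0, hq1⟩
    have c1 : ContinuousAt (fun q : ℝ => p^2 / q) q :=
      continuousAt_const.div continuousAt_id hq0.ne'
    have c2 : ContinuousAt (fun q : ℝ => 3*p*(p-1) / (q^2 - q + 1)) q :=
      continuousAt_const.div (by fun_prop) (hquad q).ne'
    have c3 : ContinuousAt (fun q : ℝ => (1-p)^2 / (1 - q)) q :=
      continuousAt_const.div (by fun_prop) (by intro h; linarith [sub_eq_zero.mp h] :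
        (1:ℝ) - q ≠ 0)
    exact (c1.sub c2).add c3
  -- tendsto at 0⁺
  have t0 : Tendsto T (nhdsWithin 0 (Set.Ioi 0)) atTop := by
    have h1 : Tendsto (fun q : ℝ => p^2 / q) (nhdsWithin 0 (Set.Ioi 0)) atTop := by
      simpa [div_eq_mul_inv] using tendsto_inv_nhdsGT_zero.const_mul_atTop
        (show (0:ℝ) < p^2 by positivity)
    have c2 : ContinuousAt (fun q : ℝ => -(3*p*(p-1)) / (q^2 - q + 1) + (1-p)^2/(1-q)) 0 := by
      refine ContinuousAt.add (continuousAt_const.div (by fun_prop) (by norm_num))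
        (continuousAt_const.div (by fun_prop) (by norm_num))
    have h2 : Tendsto (fun q : ℝ => -(3*p*(p-1)) / (q^2 - q + 1) + (1-p)^2/(1-q))
        (nhdsWithin 0 (Set.Ioi 0)) (nhds (-(3*p*(p-1))/1 + (1-p)^2/1)) := by
      have := c2.continuousWithinAt (s := Set.Ioi (0:ℝ))
      simpa [ContinuousWithinAt] using this
    have := h1.atTop_add h2
    refine this.congr fun q => ?_
    simp only [T]; ring
  -- tendsto at 1⁻
  have t1 : Tendsto T (nhdsWithin 1 (Set.Iio 1)) atTop := by
    have hsub : Tendsto (fun q : ℝ => 1 - q) (nhdsWithin 1 (Set.Iio 1))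
        (nhdsWithin 0 (Set.Ioi 0)) := by
      apply tendsto_nhdsWithin_of_tendsto_nhds_of_eventually_within
      · have : Tendsto (fun q : ℝ => 1 - q) (nhds 1) (nhds (1 - 1)) :=
          ((continuous_const.sub continuous_id).tendsto 1)
        simpa using this.mono_left nhdsWithin_le_nhds
      · filter_upwards [self_mem_nhdsWithin] with q hq
        simpa using sub_pos.mpr (Set.mem_Iio.mp hq)
    have h1 : Tendsto (fun q : ℝ => (1-p)^2 / (1 - q)) (nhdsWithin 1 (Set.Iio 1)) atTop := by
      have := (tendsto_inv_nhdsGT_zero.comp hsub).const_mul_atTop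
        (show (0:ℝ) < (1-p)^2 by nlinarith)
      simpa [div_eq_mul_inv, Function.comp] using this
    have c2 : ContinuousAt (fun q : ℝ => p^2/q - 3*p*(p-1) / (q^2 - q + 1)) 1 := by
      refine ContinuousAt.sub (continuousAt_const.div continuousAt_id (by norm_num))
        (continuousAt_const.div (by fun_prop) (by norm_num))
    have h2 : Tendsto (fun q : ℝ => p^2/q - 3*p*(p-1) / (q^2 - q + 1))
        (nhdsWithin 1 (Set.Iio 1)) (nhds (p^2/1 - 3*p*(p-1)/1)) := by
      have := c2.continuousWithinAt (s := Set.Iio (1:ℝ))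
      simpa [ContinuousWithinAt] using this
    have := h1.atTop_add h2
    refine this.congr fun q => ?_
    simp only [T]; ring
  refine ⟨hpos, t0, t1, ?_⟩
  -- minimum
  have hhalf : (1/2 : ℝ) ∈ Set.Ioo (0:ℝ) 1 := by norm_num
  set M := T (1/2) with hM
  have h0 := t0.eventually (eventually_ge_atTop M)
  have h1 := t1.eventually (eventually_ge_atTop M)
  rw [eventually_nhdsWithin_iff, Metric.eventually_nhds_iff] at h0 h1
  obtain ⟨a, ha, hA⟩ := h0
  obtain ⟨b, hb, hB⟩ := h1
  set c : ℝ := min (a/2) (1/2) with hc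
  set d : ℝ := max (1 - b/2) (1/2) with hd
  have hc0 : 0 < c := lt_min (by linarith) (by norm_num)
  have hd1 : d < 1 := max_lt (by linarith) (by norm_num)
  have hcd : Set.Icc c d ⊆ Set.Ioo (0:ℝ) 1 := fun q hq =>
    ⟨lt_of_lt_of_le hc0 hq.1, lt_of_le_of_lt hq.2 hd1⟩
  have hhalfcd : (1/2 : ℝ) ∈ Set.Icc c d := ⟨min_le_right _ _, le_max_right _ _⟩
  obtain ⟨qhat, hqhat, hmin⟩ := (isCompact_Icc (a := c) (b := d)).exists_isMinOn
    ⟨1/2, hhalfcd⟩ (fun q hq => (hcont q (hcd hq)).continuousWithinAt)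
  refine ⟨qhat, hcd hqhat, ?_⟩
  rintro q ⟨hq0, hq1⟩
  have hTM : T qhat ≤ M := hmin hhalfcd
  rcases le_or_gt c q with hqc | hqc
  · rcases le_or_gt q d with hqd | hqd
    · exact hmin ⟨hqc, hqd⟩
    · have : 1 - q < b := by
        have : 1 - b/2 ≤ d := le_max_left _ _
        linarith
      have : M ≤ T q := hB (y := q) (by rw [Real.dist_eq, abs_of_neg (by linarith : q - 1 < 0)]; linarith)
        hq1
      linarith
  · have hqa : q < a := by
      have : c ≤ a/2 := min_le_left _ _
      linarith
    have : M ≤ T q := hA (y := q) (by rw [Real.dist_eq, sub_zero, abs_of_pos hq0]; exact hqa)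
      hq0
    linarith
end
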